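/- With the data and definitions below, the Lagrangian-relaxed dynamic program admits the closed form: for every stage i with 1 ≤ i ≤ N and every capacity vector κ : C × L → ℝ, Ĵ(κ, i) = ∑_{k=i}^{N} ∑_{t∈T} λ_t·max( 0, max_{c∈C} ( (∏_{j=i}^{k−1} s_j)·p_t − R_i·∑_{ℓ∈L} q_{t,ℓ}·η_{ℓ,c} ) ) + R_i·∑_{ℓ∈L} ∑_{c∈C} η_{ℓ,c}·κ_{c,ℓ}, where R_i = ∏_{j=i}^{N−1} s_j (so R_N = 1 and the empty product in the k = i summand is 1). -/

import Mathlib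

/-!
Since the terminal penalty is affine in the capacity vector `κ`, so is every stage value:
`Ĵ(κ, i) = A_i + R_i·∑ η_{ℓ,c} κ_{c,ℓ}`. With an affine continuation value the maximization over
`u` decouples across request types, and for each type it is the choice between rejecting
(net gain `0`) and the best coach `c` (net gain `p_t − R_i·∑_ℓ q_{t,ℓ} η_{ℓ,c}`). Hence
`A_i = ∑_t λ_t·max(0, max_c(p_t − R_i·∑_ℓ q_{t,ℓ} η_{ℓ,c})) + s_i·A_{i+1}`, and unrolling this
recursion, using `s_i ≥ 0` to move `s_i` inside the maxima, gives the closed form.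
-/

/-- Resource consumption of assigning a request of type `t` to the coach in the given
`Option C` decision: `Δ(t, some c)` consumes `q t ℓ` seats of coach `c` on every leg `ℓ`,
and `Δ(t, none) = 0`. -/
def lagDelta {T C L : Type*} [DecidableEq C] (q : T → L → ℝ) (t : T) :
    Option C → (C × L → ℝ)
  | none => fun _ => 0
  | some c => fun cl => if cl.1 = c then q t cl.2 else 0

/-- The Lagrangian-relaxed dynamic program (capacity constraints dropped, penalized only at
the final stage) with multipliers `η`, indexed so that `lagJ lam p q s η N k κ` is the value
`Ĵ(κ, i)` at stage `i = N − k`: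
`Ĵ(κ, N) = max over all u of ∑ t, λ_t·(p_t·1[u t ≠ none] +
  ∑ ℓ, ∑ c, η_{ℓ,c}·(κ_{c,ℓ} − q_{t,ℓ}·1[u t = some c]))`, and for `1 ≤ i < N`,
`Ĵ(κ, i) = max over all u of ∑ t, λ_t·(p_t·1[u t ≠ none] + s_i·Ĵ(κ − Δ(t, u t), i+1))`;
maxima are taken as suprema of the (finite, nonempty) sets of achievable values. -/
noncomputable def lagJ {T C L : Type*} [Fintype T] [Fintype L] [Fintype C] [DecidableEq C]
    (lam p : T → ℝ) (q : T → L → ℝ) (s : ℕ → ℝ) (η : L → C → ℝ) (N : ℕ) :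
    ℕ → (C × L → ℝ) → ℝ
  | 0, κ =>
      sSup { v : ℝ | ∃ u : T → Option C,
        v = ∑ t, lam t * ((if u t = none then 0 else p t) +
              ∑ ℓ, ∑ c, η ℓ c * (κ (c, ℓ) - q t ℓ * (if u t = some c then 1 else 0))) }
  | (k + 1), κ =>
      sSup { v : ℝ | ∃ u : T → Option C,
        v = ∑ t, lam t * ((if u t = none then 0 else p t) +
              s (N - (k + 1)) * lagJ lam p q s η N k (κ - lagDelta q t (u t))) }

open Finset

theorem sSup_exists_sum_eq_sum_sup' {ι α : Type*} [Fintype ι] [Fintype α] [Nonempty α]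
    (F : ι → α → ℝ) :
    sSup {v : ℝ | ∃ u : ι → α, v = ∑ i, F i (u i)} = ∑ i, univ.sup' univ_nonempty (F i) := by
  refine IsGreatest.csSup_eq ⟨?_, ?_⟩
  · choose u _ hu using fun i => exists_mem_eq_sup' univ_nonempty (F i)
    exact ⟨u, sum_congr rfl fun i _ => hu i⟩
  · rintro v ⟨u, rfl⟩
    exact sum_le_sum fun i _ => le_sup' (F i) (mem_univ (u i))

theorem sup'_univ_option {C α : Type*} [Fintype C] [Nonempty C] [LinearOrder α]
    (G : Option C → α) :
    univ.sup' univ_nonempty G = max (G none) (univ.sup' univ_nonempty fun c => G (some c)) := by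
  refine le_antisymm (sup'_le _ _ ?_) (max_le (le_sup' G (mem_univ _)) ?_)
  · rintro (_ | c) _
    · exact le_max_left _ _
    · exact (le_sup' (fun c => G (some c)) (mem_univ c)).trans (le_max_right _ _)
  · exact sup'_le _ _ fun c _ => le_sup' G (mem_univ _)

section RelaxedStage

variable {T C L : Type*}

theorem sub_lagDelta_apply [DecidableEq C] (q : T → L → ℝ) (κ : C × L → ℝ) (t : T)
    (o : Option C) (c : C) (ℓ : L) :
    (κ - lagDelta q t o) (c, ℓ) = κ (c, ℓ) - q t ℓ * if o = some c then 1 else 0 := by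
  cases o <;> simp [lagDelta, eq_comm]

theorem pairing_sub_lagDelta [Fintype C] [DecidableEq C] [Fintype L] (q : T → L → ℝ)
    (η : L → C → ℝ) (κ : C × L → ℝ) (t : T) (o : Option C) :
    ∑ ℓ, ∑ c, η ℓ c * (κ - lagDelta q t o) (c, ℓ)
      = ∑ ℓ, ∑ c, η ℓ c * κ (c, ℓ) - o.elim 0 fun c => ∑ ℓ, q t ℓ * η ℓ c := by
  simp only [sub_lagDelta_apply, mul_sub, sum_sub_distrib, mul_ite, mul_one, mul_zero]
  congr 1
  cases o <;> simp [mul_comm]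

variable [Fintype C] [Nonempty C]

/-- Net gain of the best decision (reject, or accept into some coach) for a request of type `t`,
with fares weighted by `a` and shadow prices by `b`. -/
noncomputable def discountedGain [Fintype L] (p : T → ℝ) (q : T → L → ℝ) (η : L → C → ℝ)
    (a b : ℝ) (t : T) : ℝ :=
  max 0 (univ.sup' univ_nonempty fun c => a * p t - b * ∑ ℓ, q t ℓ * η ℓ c)

theorem mul_discountedGain [Fintype L] (p : T → ℝ) (q : T → L → ℝ) (η : L → C → ℝ)
    {σ : ℝ} (hσ : 0 ≤ σ) (a b : ℝ) (t : T) :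
    σ * discountedGain p q η a b t = discountedGain p q η (σ * a) (σ * b) t := by
  rw [discountedGain, mul_max_of_nonneg _ _ hσ, mul_zero, mul₀_sup' hσ]
  congr 1
  exact sup'_congr _ rfl fun c _ => by ring

theorem sup'_reject_or_assign (x W : ℝ) (g : C → ℝ) :
    univ.sup' univ_nonempty (fun o : Option C => (if o = none then 0 else x) + (W - o.elim 0 g))
      = max 0 (univ.sup' univ_nonempty fun c => x - g c) + W := by
  rw [sup'_univ_option, ← max_add_add_right, zero_add, sup'_add]
  congr 1
  · simp
  · exact sup'_congr _ rfl fun c _ => by simp only [reduceCtorEq, if_false, Option.elim]; ring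

/-- One stage of the relaxed program once the continuation value is affine in `κ`: `W` is the
value when the request is rejected and `g t c` the shadow cost of accepting `t` into coach `c`. -/
theorem sSup_relaxed_stage_eq [Fintype T] (lam p : T → ℝ) (hlam : ∀ t, 0 ≤ lam t)
    (hlamsum : ∑ t, lam t = 1) (g : T → C → ℝ) (W : ℝ) :
    sSup {v : ℝ | ∃ u : T → Option C,
        v = ∑ t, lam t * ((if u t = none then 0 else p t) + (W - (u t).elim 0 (g t)))}
      = ∑ t, lam t * max 0 (univ.sup' univ_nonempty fun c => p t - g t c) + W := by
  calc _ = ∑ t, lam t * (max 0 (univ.sup' univ_nonempty fun c => p t - g t c) + W) := by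
        refine (sSup_exists_sum_eq_sum_sup' fun t (o : Option C) =>
          lam t * ((if o = none then 0 else p t) + (W - o.elim 0 (g t)))).trans
          (sum_congr rfl fun t _ => ?_)
        rw [← sup'_reject_or_assign, mul₀_sup' (hlam t)]
    _ = _ := by simp only [mul_add, sum_add_distrib, ← sum_mul, hlamsum, one_mul]

variable [Fintype L] [Fintype T] (lam p : T → ℝ) (q : T → L → ℝ) (s : ℕ → ℝ) (η : L → C → ℝ)
  (N : ℕ)

theorem sum_Icc_discountedGain_eq {i : ℕ} (hi : i < N) (hs : 0 ≤ s i) :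
    ∑ k ∈ Icc i N, ∑ t, lam t * discountedGain p q η (∏ j ∈ Ico i k, s j) (∏ j ∈ Ico i N, s j) t
      = ∑ t, lam t * discountedGain p q η 1 (∏ j ∈ Ico i N, s j) t
        + s i * ∑ k ∈ Icc (i + 1) N, ∑ t, lam t *
            discountedGain p q η (∏ j ∈ Ico (i + 1) k, s j) (∏ j ∈ Ico (i + 1) N, s j) t := by
  rw [Icc_eq_cons_Ioc hi.le, sum_cons, Ico_self, prod_empty, ← Icc_add_one_left_eq_Ioc, mul_sum]
  congr 1
  refine sum_congr rfl fun k hk => ?_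
  rw [mul_sum]
  refine sum_congr rfl fun t _ => ?_
  rw [mul_left_comm, mul_discountedGain p q η hs, prod_eq_prod_Ico_succ_bot hi,
    prod_eq_prod_Ico_succ_bot (mem_Icc.1 hk).1]

variable [DecidableEq C]

theorem lagJ_zero (hlam : ∀ t, 0 ≤ lam t) (hlamsum : ∑ t, lam t = 1) (κ : C × L → ℝ) :
    lagJ lam p q s η N 0 κ
      = ∑ t, lam t * discountedGain p q η 1 1 t + ∑ ℓ, ∑ c, η ℓ c * κ (c, ℓ) := by
  simp only [lagJ, ← sub_lagDelta_apply, pairing_sub_lagDelta, discountedGain, one_mul]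
  exact sSup_relaxed_stage_eq lam p hlam hlamsum _ _

theorem lagJ_succ_of_affine (hlam : ∀ t, 0 ≤ lam t) (hlamsum : ∑ t, lam t = 1) {k : ℕ}
    {A R : ℝ} (hk : ∀ κ, lagJ lam p q s η N k κ = A + R * ∑ ℓ, ∑ c, η ℓ c * κ (c, ℓ))
    (κ : C × L → ℝ) :
    lagJ lam p q s η N (k + 1) κ
      = ∑ t, lam t * discountedGain p q η 1 (s (N - (k + 1)) * R) t
        + s (N - (k + 1)) * (A + R * ∑ ℓ, ∑ c, η ℓ c * κ (c, ℓ)) := by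
  have affine_step : ∀ (x : ℝ) (o : Option C) (g : C → ℝ),
      s (N - (k + 1)) * (A + R * (x - o.elim 0 g))
        = s (N - (k + 1)) * (A + R * x) - o.elim 0 fun c => s (N - (k + 1)) * R * g c := by
    rintro x (_ | c) g <;> simp only [Option.elim] <;> ring
  simp only [lagJ, hk, pairing_sub_lagDelta, affine_step, discountedGain, one_mul]
  exact sSup_relaxed_stage_eq lam p hlam hlamsum _ _

theorem lagJ_sub_eq {i : ℕ} (hlam : ∀ t, 0 ≤ lam t) (hlamsum : ∑ t, lam t = 1)
    (hs : ∀ j ∈ Ico i N, 0 ≤ s j) (hiN : i ≤ N) (κ : C × L → ℝ) :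
    lagJ lam p q s η N (N - i) κ
      = ∑ k ∈ Icc i N, ∑ t, lam t *
          discountedGain p q η (∏ j ∈ Ico i k, s j) (∏ j ∈ Ico i N, s j) t
        + (∏ j ∈ Ico i N, s j) * ∑ ℓ, ∑ c, η ℓ c * κ (c, ℓ) := by
  induction hiN using Nat.decreasingInduction generalizing κ with
  | self => simp [lagJ_zero lam p q s η N hlam hlamsum]
  | of_succ k hkN ih =>
    have hstage : N - k = N - (k + 1) + 1 := by omega
    have hindex : N - (N - (k + 1) + 1) = k := by omega
    rw [hstage, lagJ_succ_of_affine lam p q s η N hlam hlamsum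
        (ih fun j hj => hs j (Ico_subset_Ico_left k.le_succ hj)), hindex,
      sum_Icc_discountedGain_eq lam p q s η N hkN (hs k (mem_Ico.2 ⟨le_rfl, hkN⟩)),
      prod_eq_prod_Ico_succ_bot hkN]
    ring

end RelaxedStage

theorem lagJ_closed_form_general {T C L : Type*}
    [Fintype T] [Fintype C] [Nonempty C] [DecidableEq C]
    [Fintype L]
    (lam p : T → ℝ) (hlam : ∀ t, 0 ≤ lam t) (hlamsum : ∑ t, lam t = 1)
    (q : T → L → ℝ)
    (N : ℕ)
    (s : ℕ → ℝ) (hs0 : ∀ j, 1 ≤ j → j < N → 0 ≤ s j)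
    (η : L → C → ℝ)
    (i : ℕ) (hi1 : 1 ≤ i) (hiN : i ≤ N) (κ : C × L → ℝ) :
    lagJ lam p q s η N (N - i) κ
      = (∑ k ∈ Finset.Icc i N, ∑ t, lam t *
          max 0 (Finset.univ.sup' Finset.univ_nonempty (fun c : C =>
            (∏ j ∈ Finset.Ico i k, s j) * p t
              - (∏ j ∈ Finset.Ico i N, s j) * ∑ ℓ, q t ℓ * η ℓ c)))
        + (∏ j ∈ Finset.Ico i N, s j) * ∑ ℓ, ∑ c, η ℓ c * κ (c, ℓ) :=
  lagJ_sub_eq lam p q s η N hlam hlamsum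
    (fun j hj => hs0 j (hi1.trans (mem_Ico.1 hj).1) (mem_Ico.1 hj).2) hiN κ

/-- Closed form of the Lagrangian-relaxed dynamic program: with arrival probabilities
`λ_t ≥ 0` summing to `1`, fares `p_t ≥ 0`, resource consumptions `q_{t,ℓ} ≥ 0`, survival
probabilities `s_j ∈ [0,1]` for `1 ≤ j < N`, multipliers `η_{ℓ,c} ≥ 0` and horizon `N ≥ 1`,
for every stage `1 ≤ i ≤ N` and every capacity vector `κ`,
`Ĵ(κ, i) = ∑_{k=i}^{N} ∑_t λ_t·max(0, max_c((∏_{j=i}^{k−1} s_j)·p_t −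
  R_i·∑_ℓ q_{t,ℓ}·η_{ℓ,c})) + R_i·∑_ℓ ∑_c η_{ℓ,c}·κ_{c,ℓ}` where `R_i = ∏_{j=i}^{N−1} s_j`
(so `R_N = 1` and the empty product in the `k = i` summand is `1`). -/
theorem lagJ_closed_form {T C L : Type*}
    [Fintype T] [Nonempty T] [Fintype C] [Nonempty C] [DecidableEq C]
    [Fintype L] [Nonempty L]
    (lam p : T → ℝ) (hlam : ∀ t, 0 ≤ lam t) (hlamsum : ∑ t, lam t = 1)
    (hp : ∀ t, 0 ≤ p t)
    (q : T → L → ℝ) (hq : ∀ t ℓ, 0 ≤ q t ℓ)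
    (N : ℕ) (hN : 1 ≤ N)
    (s : ℕ → ℝ) (hs0 : ∀ j, 1 ≤ j → j < N → 0 ≤ s j) (hs1 : ∀ j, 1 ≤ j → j < N → s j ≤ 1)
    (η : L → C → ℝ) (hη : ∀ ℓ c, 0 ≤ η ℓ c)
    (i : ℕ) (hi1 : 1 ≤ i) (hiN : i ≤ N) (κ : C × L → ℝ) :
    lagJ lam p q s η N (N - i) κ
      = (∑ k ∈ Finset.Icc i N, ∑ t, lam t *
          max 0 (Finset.univ.sup' Finset.univ_nonempty (fun c : C =>
            (∏ j ∈ Finset.Ico i k, s j) * p t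
              - (∏ j ∈ Finset.Ico i N, s j) * ∑ ℓ, q t ℓ * η ℓ c)))
        + (∏ j ∈ Finset.Ico i N, s j) * ∑ ℓ, ∑ c, η ℓ c * κ (c, ℓ) :=
  lagJ_closed_form_general lam p hlam hlamsum q N s hs0 η i hi1 hiN κ
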